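/- Assume κ ≥ 0 and the gain-ratio condition K_d^gsc / K_θ^gsc = K_d^msc / K_θ^msc. Then every solution x : [0,∞) → ℝ⁶ of the linearized closed-loop wind-turbine/grid model is bounded: there exists R > 0 (depending on the initial condition) such that ‖x(t)‖ ≤ R for all t ≥ 0; in particular V(x(t)) ≤ V(x(0)) for all t ≥ 0. -/

import Mathlib

/-!
Along a solution, the derivative of `V` is
`-(K_d^gsc / (K_θ^gsc C_dc)) (b_g ρ₁ + b_msc ρ₂)² - (κ / K_θ^msc) ω₂² - P² / (K_θ^gsc k_g) ≤ 0`: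
the weights in `V` make all other cross terms cancel, and the gain-ratio condition lets the two
damping terms combine into the square of the DC-link current `b_g ρ₁ + b_msc ρ₂`. So `V` is
nonincreasing, and since it is a positive definite quadratic form, `V(x(t)) ≤ V(x(0))` confines
`x(t)` to a ball.
-/

/-- A solution of the linearized closed-loop wind-turbine/grid model with state
`x = (ρ₁, ρ₂, ω₁, ω₂, v, P)` (indices `0,…,5`). -/
def IsSolution (Kdg Kdm Kθg Kθm bg bmsc Jg Jwt ω0 ωdel Cdc Tg kg κ : ℝ)
    (x : ℝ → EuclideanSpace ℝ (Fin 6)) : Prop :=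
  ∀ t : ℝ, 0 ≤ t →
    HasDerivAt (fun s => x s 0)
      (-(Kdg / Cdc) * (bg * x t 0 + bmsc * x t 1) - x t 2 + Kθg * x t 4) t ∧
    HasDerivAt (fun s => x s 1)
      (-(Kdm / Cdc) * (bg * x t 0 + bmsc * x t 1) - x t 3 + Kθm * x t 4) t ∧
    HasDerivAt (fun s => x s 2) ((bg * x t 0 + x t 5) / (Jg * ω0)) t ∧
    HasDerivAt (fun s => x s 3) ((bmsc * x t 1 - κ * x t 3) / (Jwt * ωdel)) t ∧
    HasDerivAt (fun s => x s 4) (-(bg * x t 0 + bmsc * x t 1) / Cdc) t ∧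
    HasDerivAt (fun s => x s 5) ((-kg * x t 2 - x t 5) / Tg) t

/-- The LaSalle function `V`. -/
noncomputable def lasalleV (Kθg Kθm bg bmsc Jg Jwt ω0 ωdel Cdc Tg kg : ℝ)
    (x : EuclideanSpace ℝ (Fin 6)) : ℝ :=
  (1 / 2) * ((bg / Kθg) * (x 0) ^ 2 + (bmsc / Kθm) * (x 1) ^ 2 +
    (Jg * ω0 / Kθg) * (x 2) ^ 2 + (Jwt * ωdel / Kθm) * (x 3) ^ 2 +
    Cdc * (x 4) ^ 2 + (Tg / (Kθg * kg)) * (x 5) ^ 2)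

open Set

lemma EuclideanSpace.exists_pos_mul_norm_sq_le_sum_mul_sq {ι : Type*} [Fintype ι] [Nonempty ι]
    {w : ι → ℝ} (hw : ∀ i, 0 < w i) :
    ∃ m, 0 < m ∧ ∀ y : EuclideanSpace ℝ ι, m * ‖y‖ ^ 2 ≤ ∑ i, w i * y i ^ 2 := by
  refine ⟨Finset.univ.inf' Finset.univ_nonempty w,
    (Finset.lt_inf'_iff _).2 fun i _ => hw i, fun y => ?_⟩
  rw [EuclideanSpace.real_norm_sq_eq, Finset.mul_sum]
  exact Finset.sum_le_sum fun i _ =>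
    mul_le_mul_of_nonneg_right (Finset.inf'_le _ (Finset.mem_univ i)) (sq_nonneg _)

lemma exists_pos_norm_le_of_mul_norm_sq_le {α E : Type*} [SeminormedAddCommGroup E]
    {x : α → E} {s : Set α} {m c : ℝ} (hm : 0 < m) (h : ∀ t ∈ s, m * ‖x t‖ ^ 2 ≤ c) :
    ∃ R, 0 < R ∧ ∀ t ∈ s, ‖x t‖ ≤ R := by
  refine ⟨√(c / m) + 1, by positivity, fun t ht => ?_⟩
  have hsq : ‖x t‖ ^ 2 ≤ c / m := (le_div_iff₀' hm).2 (h t ht)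
  linarith [abs_norm (x t) ▸ Real.abs_le_sqrt hsq]

lemma antitoneOn_Ici_of_hasDerivAt_nonpos {f f' : ℝ → ℝ} {a : ℝ}
    (hf : ∀ t ∈ Ici a, HasDerivAt f (f' t) t) (hf' : ∀ t ∈ Ici a, f' t ≤ 0) :
    AntitoneOn f (Ici a) := by
  refine antitoneOn_of_hasDerivWithinAt_nonpos (f' := f') (convex_Ici a)
    (fun t ht => (hf t ht).continuousAt.continuousWithinAt) (fun t ht => ?_) fun t ht => ?_
  all_goals rw [interior_Ici] at ht
  exacts [(hf t (mem_Ici.2 ht.le)).hasDerivWithinAt, hf' t (mem_Ici.2 ht.le)]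

section LaSalle

variable {Kθg Kθm bg bmsc Jg Jwt ω0 ωdel Cdc Tg kg : ℝ}

noncomputable def lasalleWeights (Kθg Kθm bg bmsc Jg Jwt ω0 ωdel Cdc Tg kg : ℝ) : Fin 6 → ℝ :=
  ![bg / Kθg, bmsc / Kθm, Jg * ω0 / Kθg, Jwt * ωdel / Kθm, Cdc, Tg / (Kθg * kg)]

lemma lasalleV_eq_sum (y : EuclideanSpace ℝ (Fin 6)) :
    lasalleV Kθg Kθm bg bmsc Jg Jwt ω0 ωdel Cdc Tg kg y =
      (1 / 2) * ∑ i, lasalleWeights Kθg Kθm bg bmsc Jg Jwt ω0 ωdel Cdc Tg kg i * y i ^ 2 := by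
  simp [lasalleV, lasalleWeights, Fin.sum_univ_six]

lemma exists_pos_mul_norm_sq_le_lasalleV (hbg : 0 < bg) (hbmsc : 0 < bmsc) (hJg : 0 < Jg)
    (hJwt : 0 < Jwt) (hω0 : 0 < ω0) (hωdel : 0 < ωdel) (hCdc : 0 < Cdc) (hTg : 0 < Tg)
    (hkg : 0 < kg) (hKθg : 0 < Kθg) (hKθm : 0 < Kθm) :
    ∃ m, 0 < m ∧ ∀ y : EuclideanSpace ℝ (Fin 6),
      m * ‖y‖ ^ 2 ≤ lasalleV Kθg Kθm bg bmsc Jg Jwt ω0 ωdel Cdc Tg kg y := by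
  have hw : ∀ i, 0 < lasalleWeights Kθg Kθm bg bmsc Jg Jwt ω0 ωdel Cdc Tg kg i := by
    intro i
    fin_cases i <;>
      simp only [lasalleWeights, Fin.zero_eta, Fin.mk_one, Fin.reduceFinMk, Fin.isValue,
        Matrix.cons_val_zero, Matrix.cons_val_one, Matrix.cons_val] <;> positivity
  obtain ⟨m, hm, hbound⟩ := EuclideanSpace.exists_pos_mul_norm_sq_le_sum_mul_sq hw
  refine ⟨m / 2, by positivity, fun y => ?_⟩
  rw [lasalleV_eq_sum]
  linarith [hbound y]

variable {Kdg Kdm κ : ℝ} {x : ℝ → EuclideanSpace ℝ (Fin 6)}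

lemma IsSolution.hasDerivAt_lasalleV
    (hx : IsSolution Kdg Kdm Kθg Kθm bg bmsc Jg Jwt ω0 ωdel Cdc Tg kg κ x)
    (hJg : Jg ≠ 0) (hJwt : Jwt ≠ 0) (hω0 : ω0 ≠ 0) (hωdel : ωdel ≠ 0) (hCdc : Cdc ≠ 0)
    (hTg : Tg ≠ 0) (hkg : kg ≠ 0) (hKθg : Kθg ≠ 0) (hKθm : Kθm ≠ 0)
    (hratio : Kdg / Kθg = Kdm / Kθm) {t : ℝ} (ht : 0 ≤ t) :
    HasDerivAt (fun s => lasalleV Kθg Kθm bg bmsc Jg Jwt ω0 ωdel Cdc Tg kg (x s))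
      (-(Kdg / (Kθg * Cdc)) * (bg * x t 0 + bmsc * x t 1) ^ 2 - κ / Kθm * x t 3 ^ 2
        - x t 5 ^ 2 / (Kθg * kg)) t := by
  obtain ⟨h0, h1, h2, h3, h4, h5⟩ := hx t ht
  have hr : Kdg * Kθm = Kdm * Kθg := (div_eq_div_iff hKθg hKθm).1 hratio
  refine (((((((h0.pow 2).const_mul (bg / Kθg)).add ((h1.pow 2).const_mul (bmsc / Kθm))).add
    ((h2.pow 2).const_mul (Jg * ω0 / Kθg))).add ((h3.pow 2).const_mul (Jwt * ωdel / Kθm))).add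
    ((h4.pow 2).const_mul Cdc)).add ((h5.pow 2).const_mul (Tg / (Kθg * kg)))).const_mul
    (1 / 2 : ℝ) |>.congr_deriv ?_
  field_simp
  linear_combination 2 * bmsc * x t 1 * (bg * x t 0 + bmsc * x t 1) * kg * hr

lemma IsSolution.antitoneOn_lasalleV
    (hx : IsSolution Kdg Kdm Kθg Kθm bg bmsc Jg Jwt ω0 ωdel Cdc Tg kg κ x)
    (hJg : Jg ≠ 0) (hJwt : Jwt ≠ 0) (hω0 : ω0 ≠ 0) (hωdel : ωdel ≠ 0) (hCdc : 0 < Cdc)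
    (hTg : Tg ≠ 0) (hkg : 0 < kg) (hKθg : 0 < Kθg) (hKθm : 0 < Kθm) (hKdg : 0 ≤ Kdg)
    (hκ : 0 ≤ κ) (hratio : Kdg / Kθg = Kdm / Kθm) :
    AntitoneOn (fun s => lasalleV Kθg Kθm bg bmsc Jg Jwt ω0 ωdel Cdc Tg kg (x s)) (Ici 0) := by
  refine antitoneOn_Ici_of_hasDerivAt_nonpos (fun t ht => hx.hasDerivAt_lasalleV hJg hJwt hω0
    hωdel hCdc.ne' hTg hkg.ne' hKθg.ne' hKθm.ne' hratio ht) fun t _ => ?_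
  have : 0 ≤ Kdg / (Kθg * Cdc) * (bg * x t 0 + bmsc * x t 1) ^ 2 := by positivity
  have : 0 ≤ κ / Kθm * x t 3 ^ 2 := by positivity
  have : 0 ≤ x t 5 ^ 2 / (Kθg * kg) := by positivity
  linarith

end LaSalle

theorem solutions_bounded_general
    (bg bmsc Jg Jwt ω0 ωdel Cdc Tg kg Kθg Kθm Kdg Kdm Kωr Kβ Kp : ℝ)
    (hbg : 0 < bg) (hbmsc : 0 < bmsc) (hJg : 0 < Jg) (hJwt : 0 < Jwt)
    (hω0 : 0 < ω0) (hωdel : 0 < ωdel) (hCdc : 0 < Cdc) (hTg : 0 < Tg)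
    (hkg : 0 < kg) (hKθg : 0 < Kθg) (hKθm : 0 < Kθm)
    (hKdg : 0 < Kdg)
    (hκ : 0 ≤ Kωr + Kβ * Kp)
    (hratio : Kdg / Kθg = Kdm / Kθm)
    (x : ℝ → EuclideanSpace ℝ (Fin 6))
    (hx : IsSolution Kdg Kdm Kθg Kθm bg bmsc Jg Jwt ω0 ωdel Cdc Tg kg
      (Kωr + Kβ * Kp) x) :
    (∃ R : ℝ, 0 < R ∧ ∀ t : ℝ, 0 ≤ t → ‖x t‖ ≤ R) ∧
    (∀ t : ℝ, 0 ≤ t →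
      lasalleV Kθg Kθm bg bmsc Jg Jwt ω0 ωdel Cdc Tg kg (x t) ≤
        lasalleV Kθg Kθm bg bmsc Jg Jwt ω0 ωdel Cdc Tg kg (x 0)) := by
  have hanti := hx.antitoneOn_lasalleV hJg.ne' hJwt.ne' hω0.ne' hωdel.ne' hCdc hTg.ne' hkg
    hKθg hKθm hKdg.le hκ hratio
  have hdecr := fun t (ht : (0 : ℝ) ≤ t) => hanti self_mem_Ici ht ht
  obtain ⟨m, hm, hcoercive⟩ := exists_pos_mul_norm_sq_le_lasalleV hbg hbmsc hJg hJwt hω0 hωdel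
    hCdc hTg hkg hKθg hKθm
  exact ⟨exists_pos_norm_le_of_mul_norm_sq_le hm fun t ht => (hcoercive _).trans (hdecr t ht),
    hdecr⟩

/-- **Boundedness of trajectories.** If `κ ≥ 0` and
`K_d^gsc / K_θ^gsc = K_d^msc / K_θ^msc`, every solution of the linearized model
is bounded on `[0, ∞)`, and `V(x(t)) ≤ V(x(0))` for all `t ≥ 0`. -/
theorem solutions_bounded
    (bg bmsc Jg Jwt ω0 ωdel Cdc Tg kg Kθg Kθm Kdg Kdm Kωr Kβ Kp : ℝ)
    (hbg : 0 < bg) (hbmsc : 0 < bmsc) (hJg : 0 < Jg) (hJwt : 0 < Jwt)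
    (hω0 : 0 < ω0) (hωdel : 0 < ωdel) (hCdc : 0 < Cdc) (hTg : 0 < Tg)
    (hkg : 0 < kg) (hKθg : 0 < Kθg) (hKθm : 0 < Kθm)
    (hKdg : 0 < Kdg) (hKdm : 0 < Kdm)
    (hκ : 0 ≤ Kωr + Kβ * Kp)
    (hratio : Kdg / Kθg = Kdm / Kθm)
    (x : ℝ → EuclideanSpace ℝ (Fin 6))
    (hx : IsSolution Kdg Kdm Kθg Kθm bg bmsc Jg Jwt ω0 ωdel Cdc Tg kg
      (Kωr + Kβ * Kp) x) :
    (∃ R : ℝ, 0 < R ∧ ∀ t : ℝ, 0 ≤ t → ‖x t‖ ≤ R) ∧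
    (∀ t : ℝ, 0 ≤ t →
      lasalleV Kθg Kθm bg bmsc Jg Jwt ω0 ωdel Cdc Tg kg (x t) ≤
        lasalleV Kθg Kθm bg bmsc Jg Jwt ω0 ωdel Cdc Tg kg (x 0)) :=
  solutions_bounded_general bg bmsc Jg Jwt ω0 ωdel Cdc Tg kg Kθg Kθm Kdg Kdm Kωr Kβ Kp hbg hbmsc hJg
    hJwt hω0 hωdel hCdc hTg hkg hKθg hKθm hKdg hκ hratio x hx
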